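/- arXiv:math/0610943 — 4 statements merged into one kernel-verified Lean document; each statement's English description precedes it below -/
import Mathlib

section
/- For real numbers λ₁,…,λₙ (n > 1), defining H_r = (n choose r)⁻¹ · σ_r(λ₁,…,λₙ) where σ_r is the r-th elementary symmetric polynomial, one has H_r² ≥ H_{r-1} · H_{r+1} for all 1 ≤ r < n. -/
/-- The `r`-th elementary symmetric polynomial of `λ₁, …, λₙ`. -/
noncomputable def esymm (n r : ℕ) (l : Fin n → ℝ) : ℝ :=
  ∑ s ∈ (Finset.univ : Finset (Fin n)).powersetCard r, ∏ i ∈ s, l i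

/-!
Write a real-rooted polynomial of degree at most `m` as `p = ∑ₖ (m choose k) bₖ Xᵏ`. By Rolle's
theorem `p'` is again real-rooted, and relative to `m - 1` its normalized coefficients are
`m bₖ₊₁`; the reflection `Xᵐ p(1/X)` is real-rooted too and reverses the `bₖ`. Differentiating
`k` times, reflecting, and differentiating `m - k - 2` more times turns `bₖ bₖ₊₂ ≤ bₖ₊₁²` into the
statement that a real-rooted quadratic has nonnegative discriminant. The `H_r` are the normalized
coefficients of the reflection of `∏ (X + λᵢ)`, i.e. of `∏ (1 + λᵢ X)`.
-/

open Polynomial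

namespace Polynomial

theorem reflect_eq_X_pow_mul_reverse {R : Type*} [Semiring R] {f : R[X]} {N : ℕ}
    (hN : f.natDegree ≤ N) : f.reflect N = X ^ (N - f.natDegree) * f.reverse := by
  have := reflect_mul (1 : R[X]) f (F := N - f.natDegree) (G := f.natDegree) (by simp) le_rfl
  rwa [one_mul, Nat.sub_add_cancel hN, reflect_one] at this

section Field

variable {K : Type*} [Field K]

theorem Splits.reverse {f : K[X]} (hf : f.Splits) : f.reverse.Splits := by
  induction hf using Submonoid.closure_induction with
  | mem f hf =>
    refine .of_natDegree_le_one ((reverse_natDegree_le f).trans ?_)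
    rcases hf with ⟨a, rfl⟩ | ⟨a, rfl⟩
    · exact (natDegree_C a).le.trans zero_le_one
    · exact (natDegree_X_add_C a).le
  | one => exact .of_natDegree_le_one ((reverse_natDegree_le 1).trans (by simp))
  | mul f g _ _ hf hg => rw [reverse_mul_of_domain]; exact hf.mul hg

theorem Splits.reflect {f : K[X]} (hf : f.Splits) {N : ℕ} (hN : f.natDegree ≤ N) :
    (f.reflect N).Splits := by
  rw [reflect_eq_X_pow_mul_reverse hN]
  exact (Splits.X_pow _).mul hf.reverse

theorem Splits.discrim_coeff_nonneg [LinearOrder K] [IsStrictOrderedRing K] {p : K[X]}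
    (hp : p.Splits) (hdeg : p.natDegree ≤ 2) :
    0 ≤ discrim (p.coeff 2) (p.coeff 1) (p.coeff 0) := by
  rcases eq_or_ne (p.coeff 2) 0 with h2 | h2
  · rw [discrim, h2]
    nlinarith [sq_nonneg (p.coeff 1)]
  have hdeg2 : p.natDegree = 2 := le_antisymm hdeg (le_natDegree_of_ne_zero h2)
  obtain ⟨x, hx⟩ := hp.exists_eval_eq_zero <| by
    rw [degree_eq_natDegree (by rintro rfl; simp at h2), hdeg2]
    decide
  simp only [eval_eq_sum_range, hdeg2, Finset.sum_range_succ, Finset.sum_range_zero] at hx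
  rw [discrim_eq_sq_of_quadratic_eq_zero (x := x) (by linear_combination hx)]
  positivity

noncomputable def normalizedCoeff (m : ℕ) (p : K[X]) (k : ℕ) : K :=
  p.coeff k / m.choose k

theorem normalizedCoeff_derivative [CharZero K] (m : ℕ) (p : K[X]) (k : ℕ) :
    normalizedCoeff m (derivative p) k = (m + 1) * normalizedCoeff (m + 1) p (k + 1) := by
  have hchoose : ((m + 1 : ℕ) : K) * m.choose k = (m + 1).choose (k + 1) * (k + 1 : ℕ) := by
    exact_mod_cast Nat.add_one_mul_choose_eq m k
  rcases eq_or_ne (m.choose k : K) 0 with h | h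
  · have h' : ((m + 1).choose (k + 1) : K) = 0 := by
      simpa [h, Nat.cast_add_one_ne_zero] using hchoose.symm
    simp [normalizedCoeff, h, h']
  · have h' : ((m + 1).choose (k + 1) : K) ≠ 0 := by
      intro h'
      simp [h', h, Nat.cast_add_one_ne_zero] at hchoose
    simp only [normalizedCoeff, coeff_derivative]
    field_simp
    push_cast at hchoose
    linear_combination -p.coeff (k + 1) * hchoose

theorem normalizedCoeff_reflect {m k : ℕ} (p : K[X]) (hk : k ≤ m) :
    normalizedCoeff m (p.reflect m) k = normalizedCoeff m p (m - k) := by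
  rw [normalizedCoeff, normalizedCoeff, coeff_reflect, revAt_le hk, Nat.choose_symm hk]

end Field

theorem Splits.derivative {p : ℝ[X]} (hp : p.Splits) : p.derivative.Splits := by
  rw [splits_iff_card_roots] at hp ⊢
  have := card_roots_le_derivative p
  have := card_roots' p.derivative
  rw [natDegree_derivative] at this ⊢
  omega

theorem normalizedCoeff_succ_mul_le_sq_of_derivative {m : ℕ}
    (ih : ∀ {q : ℝ[X]}, q.Splits → q.natDegree ≤ m → ∀ {k : ℕ}, k + 2 ≤ m →
      normalizedCoeff m q k * normalizedCoeff m q (k + 2) ≤ normalizedCoeff m q (k + 1) ^ 2)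
    {p : ℝ[X]} (hp : p.Splits) (hdeg : p.natDegree ≤ m + 1) {k : ℕ} (hk : k + 2 ≤ m) :
    normalizedCoeff (m + 1) p (k + 1) * normalizedCoeff (m + 1) p (k + 3)
      ≤ normalizedCoeff (m + 1) p (k + 2) ^ 2 := by
  have h := ih hp.derivative (by rw [natDegree_derivative]; omega) hk
  simp only [normalizedCoeff_derivative] at h
  exact le_of_mul_le_mul_left (a := ((m : ℝ) + 1) ^ 2) (by linear_combination h) (by positivity)

theorem normalizedCoeff_reflect_mul_le_sq_iff {m j k : ℕ} (p : ℝ[X]) (hjk : j + k + 2 = m) :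
    normalizedCoeff m (p.reflect m) j * normalizedCoeff m (p.reflect m) (j + 2)
        ≤ normalizedCoeff m (p.reflect m) (j + 1) ^ 2 ↔
      normalizedCoeff m p k * normalizedCoeff m p (k + 2) ≤ normalizedCoeff m p (k + 1) ^ 2 := by
  rw [normalizedCoeff_reflect p (by omega), normalizedCoeff_reflect p (by omega),
    normalizedCoeff_reflect p (by omega), show m - j = k + 2 by omega,
    show m - (j + 2) = k by omega, show m - (j + 1) = k + 1 by omega, mul_comm]

theorem Splits.normalizedCoeff_mul_le_sq {m : ℕ} {p : ℝ[X]} (hp : p.Splits)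
    (hdeg : p.natDegree ≤ m) {k : ℕ} (hk : k + 2 ≤ m) :
    normalizedCoeff m p k * normalizedCoeff m p (k + 2) ≤ normalizedCoeff m p (k + 1) ^ 2 := by
  induction m generalizing p k with
  | zero => omega
  | succ m ih =>
    obtain _ | k := k
    · obtain _ | _ | j := m
      · omega
      · have h := hp.discrim_coeff_nonneg hdeg
        rw [discrim] at h
        norm_num [normalizedCoeff]
        linarith
      · rw [← normalizedCoeff_reflect_mul_le_sq_iff p (j := j + 1) (by omega)]
        exact normalizedCoeff_succ_mul_le_sq_of_derivative ih (hp.reflect hdeg)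
          (natDegree_reflect_le.trans (max_le le_rfl hdeg)) le_rfl
    · exact normalizedCoeff_succ_mul_le_sq_of_derivative ih hp hdeg (by omega)

end Polynomial

theorem esymm_div_choose_eq_normalizedCoeff (n : ℕ) (l : Fin n → ℝ) {r : ℕ} (hr : r ≤ n) :
    esymm n r l / n.choose r = normalizedCoeff n ((∏ i, (X + C (l i))).reflect n) r := by
  rw [normalizedCoeff_reflect _ hr, normalizedCoeff, Finset.prod_X_add_C_coeff _ _ (by simp),
    Finset.card_univ, Fintype.card_fin, Nat.sub_sub_self hr, Nat.choose_symm hr, esymm]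

theorem newton_inequality_general (n : ℕ) (l : Fin n → ℝ)
    (H : ℕ → ℝ) (hH : ∀ r, H r = esymm n r l / (n.choose r)) :
    ∀ r : ℕ, 1 ≤ r → r < n → H (r - 1) * H (r + 1) ≤ (H r) ^ 2 := by
  rintro r hr hrn
  obtain ⟨k, rfl⟩ : ∃ k, r = k + 1 := ⟨r - 1, by omega⟩
  have hdeg : (∏ i, (X + C (l i))).natDegree ≤ n := (natDegree_prod_le _ _).trans (by simp)
  have hsplit : (∏ i, (X + C (l i))).Splits := Splits.prod fun i _ => Splits.X_add_C (l i)
  rw [hH, hH, hH, Nat.add_sub_cancel, esymm_div_choose_eq_normalizedCoeff n l (by omega),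
    esymm_div_choose_eq_normalizedCoeff n l (by omega),
    esymm_div_choose_eq_normalizedCoeff n l (by omega)]
  exact (hsplit.reflect hdeg).normalizedCoeff_mul_le_sq
    (natDegree_reflect_le.trans (max_le le_rfl hdeg)) (by omega)

/-- Newton's inequality `H_{r-1} H_{r+1} ≤ H_r²` for the normalized elementary
symmetric means of arbitrary real numbers. -/
theorem newton_inequality (n : ℕ) (hn : 1 < n) (l : Fin n → ℝ)
    (H : ℕ → ℝ) (hH : ∀ r, H r = esymm n r l / (n.choose r)) :
    ∀ r : ℕ, 1 ≤ r → r < n → H (r - 1) * H (r + 1) ≤ (H r) ^ 2 :=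
  newton_inequality_general n l H hH
end

section
/- For real numbers λ₁,…,λₙ (n > 1), if H₁, H₂, …, H_r > 0 for some 1 < r ≤ n, then H₁ ≥ H₂^{1/2} ≥ H₃^{1/3} ≥ ⋯ ≥ H_r^{1/r}. -/
/-!
Newton's inequalities `Hₖ Hₖ₊₂ ≤ Hₖ₊₁²` hold for every finite multiset of reals. The roots of the
derivative of `∏ (X - λᵢ)` are real by Rolle's theorem and have the same means `H₀, …, H_{n-1}`, so
it suffices to treat `n = k + 2`. There the products `Qᵢ = ∏_{j ≠ i} λⱼ` satisfy
`e_{n-1}(λ) = e₁(Q)` and `e_{n-2}(λ) eₙ(λ) = e₂(Q)`, which turns the inequality into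
`H₂(Q) ≤ H₁(Q)²`, i.e. Cauchy–Schwarz. Multiplying `Hᵢ Hᵢ₊₂ ≤ Hᵢ₊₁²` raised to the power `i + 1`
with `Hᵢ₊₁ⁱ ≤ Hᵢⁱ⁺¹` gives `Hᵢ₊₂ⁱ⁺¹ ≤ Hᵢ₊₁ⁱ⁺²` while the means stay positive.
-/

open Finset Polynomial

namespace Multiset

section CommSemiring

variable {R : Type*} [CommSemiring R]

theorem esymm_zero (s : Multiset R) : s.esymm 0 = 1 := by
  simp [esymm, powersetCard_zero_left]

theorem esymm_one (s : Multiset R) : s.esymm 1 = s.sum := by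
  simp [esymm, powersetCard_one]

theorem esymm_eq_zero_of_card_lt {s : Multiset R} {k : ℕ}
    (h : card s < k) : s.esymm k = 0 := by
  simp [esymm, powersetCard_eq_empty _ h]

theorem esymm_cons_succ (a : R) (s : Multiset R) (k : ℕ) :
    (a ::ₘ s).esymm (k + 1) = s.esymm (k + 1) + a * s.esymm k := by
  simp [esymm, powersetCard_cons, sum_map_mul_left]

end CommSemiring

theorem two_mul_esymm_two {R : Type*} [CommRing R] (s : Multiset R) :
    2 * s.esymm 2 = s.sum ^ 2 - (s.map (· ^ 2)).sum := by
  induction s using Multiset.induction_on with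
  | empty => simp [esymm_eq_zero_of_card_lt (s := (0 : Multiset R)) (k := 2) (by simp)]
  | cons a s ih =>
    rw [esymm_cons_succ, esymm_one, sum_cons, map_cons, sum_cons]
    linear_combination ih

theorem sq_sum_le_card_mul_sum_sq (s : Multiset ℝ) :
    s.sum ^ 2 ≤ card s * (s.map (· ^ 2)).sum := by
  classical
  have := _root_.sq_sum_le_card_mul_sum_sq (s := (univ : Finset s)) (f := fun x => (x : ℝ))
  rw [← map_univ_coe s, map_map, card_map]
  exact this

/-- `Hₖ = eₖ(s) / (card s choose k)`; it is `0` for `k > card s` (division by zero), so Newton's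
inequality holds for every `k`. -/
noncomputable def esymmMean (s : Multiset ℝ) (k : ℕ) : ℝ :=
  s.esymm k / (card s).choose k

theorem esymmMean_zero (s : Multiset ℝ) : s.esymmMean 0 = 1 := by
  simp [esymmMean, esymm_zero]

theorem esymmMean_of_card_lt {s : Multiset ℝ} {k : ℕ} (h : card s < k) : s.esymmMean k = 0 := by
  rw [esymmMean, esymm_eq_zero_of_card_lt h, zero_div]

theorem esymmMean_two_le_sq_esymmMean_one (s : Multiset ℝ) :
    s.esymmMean 2 ≤ s.esymmMean 1 ^ 2 := by
  rcases Nat.lt_or_ge (card s) 2 with hs | hs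
  · rw [esymmMean_of_card_lt hs]
    positivity
  have hn : (2 : ℝ) ≤ card s := by exact_mod_cast hs
  rw [esymmMean, esymmMean, esymm_one, Nat.choose_one_right, Nat.cast_choose_two, div_pow,
    div_le_div_iff₀ (by nlinarith) (by positivity)]
  nlinarith [two_mul_esymm_two s, sq_sum_le_card_mul_sum_sq s]

end Multiset

section TopDegree

variable {ι R : Type*} [Fintype ι] [DecidableEq ι] [CommSemiring R] (g : ι → R)

theorem Finset.esymm_map_univ_card_sub {j : ℕ} (hj : j ≤ Fintype.card ι) :
    (univ.val.map g).esymm (Fintype.card ι - j) = ∑ u ∈ univ.powersetCard j, ∏ i ∈ uᶜ, g i := by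
  rw [Finset.esymm_map_val]
  refine sum_nbij' compl compl ?_ ?_ (fun t _ => compl_compl t) (fun t _ => compl_compl t)
    (fun t _ => by rw [compl_compl]) <;>
  · intro t ht
    simp only [mem_powersetCard, subset_univ, true_and, card_compl] at ht ⊢
    omega

theorem Finset.esymm_map_univ_card_sub_one [Nonempty ι] :
    (univ.val.map g).esymm (Fintype.card ι - 1) = ∑ i, ∏ j ∈ {i}ᶜ, g j := by
  rw [esymm_map_univ_card_sub g Fintype.card_pos, powersetCard_one, sum_map]
  rfl

theorem Finset.esymm_map_univ_card_sub_two_mul_esymm_card (hι : 2 ≤ Fintype.card ι) :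
    (univ.val.map g).esymm (Fintype.card ι - 2) * (univ.val.map g).esymm (Fintype.card ι) =
      (univ.val.map fun i => ∏ j ∈ {i}ᶜ, g j).esymm 2 := by
  have hprod : (univ.val.map g).esymm (Fintype.card ι) = ∏ i, g i := by
    simpa using esymm_map_univ_card_sub g (Nat.zero_le _)
  rw [hprod, esymm_map_univ_card_sub g hι, esymm_map_val, sum_mul]
  refine sum_congr rfl fun u hu => ?_
  obtain ⟨i, j, hij, rfl⟩ := card_eq_two.1 (mem_powersetCard.1 hu).2
  have hcompl : ∀ {a b : ι}, a ≠ b → ({a}ᶜ : Finset ι) = insert b {a, b}ᶜ := by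
    intro a b hab
    ext x
    simp only [mem_compl, mem_singleton, mem_insert]
    grind
  rw [prod_pair hij, hcompl hij, hcompl hij.symm, pair_comm j i, prod_insert (by simp),
    prod_insert (by simp), ← prod_compl_mul_prod {i, j}, prod_pair hij]
  ring

end TopDegree

namespace Polynomial

theorem card_roots_derivative_eq_natDegree {p : ℝ[X]}
    (hroots : Multiset.card p.roots = p.natDegree) :
    Multiset.card (derivative p).roots = (derivative p).natDegree := by
  have := card_roots_le_derivative p
  have := card_roots' (derivative p)
  rw [natDegree_derivative] at *
  omega

theorem natDegree_mul_esymm_roots_derivative {p : ℝ[X]}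
    (hroots : Multiset.card p.roots = p.natDegree) {m : ℕ} (hm : m < p.natDegree) :
    (p.natDegree : ℝ) * (derivative p).roots.esymm m =
      ((p.natDegree - m : ℕ) : ℝ) * p.roots.esymm m := by
  set N := p.natDegree with hN
  have hp : p.leadingCoeff ≠ 0 := leadingCoeff_ne_zero.2 (by rintro rfl; simp [N] at hm)
  have hlead : (derivative p).leadingCoeff = p.leadingCoeff * N := by
    rw [leadingCoeff, natDegree_derivative, coeff_derivative, ← hN,
      Nat.sub_add_cancel (by omega), Nat.cast_sub (by omega)]
    simp only [leadingCoeff, ← hN]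
    ring
  have hder := coeff_derivative p (N - 1 - m)
  rw [coeff_eq_esymm_roots_of_card (card_roots_derivative_eq_natDegree hroots) (by simp; omega),
    coeff_eq_esymm_roots_of_card hroots (by omega), hlead, natDegree_derivative, ← hN] at hder
  rw [show N - 1 - (N - 1 - m) = m by omega, show N - 1 - m + 1 = N - m by omega,
    show N - (N - m) = m by omega] at hder
  rw [show ((N - 1 - m : ℕ) : ℝ) + 1 = ((N - m : ℕ) : ℝ) by norm_cast; omega] at hder
  apply mul_left_cancel₀ (mul_ne_zero hp (by simp) : p.leadingCoeff * (-1) ^ m ≠ 0)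
  linear_combination hder

end Polynomial

namespace Multiset

theorem esymmMean_mul_esymmMean_le_sq_of_card_eq {s : Multiset ℝ} {k : ℕ} (hs : card s = k + 2) :
    s.esymmMean k * s.esymmMean (k + 2) ≤ s.esymmMean (k + 1) ^ 2 := by
  classical
  set q : Multiset ℝ := (univ : Finset s).val.map fun i : s => ∏ j ∈ ({i}ᶜ : Finset s), (j : ℝ)
    with hq_def
  have hcard : Fintype.card s = k + 2 := by rw [Multiset.card_coe, hs]
  have hq : card q = k + 2 := by simp [q, hs]
  have : Nonempty s := Fintype.card_pos_iff.1 (by omega)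
  have h1 := esymm_map_univ_card_sub_one (fun x : s => (x : ℝ))
  have h2 := esymm_map_univ_card_sub_two_mul_esymm_card (fun x : s => (x : ℝ)) (by omega)
  rw [map_univ_coe, hcard] at h1 h2
  rw [Nat.add_sub_cancel, ← hq_def] at h2
  have hmean1 : s.esymmMean (k + 1) = q.esymmMean 1 := by
    rw [esymmMean, esymmMean, hs, hq, esymm_one, Nat.choose_succ_self_right,
      Nat.choose_one_right]
    exact congrArg (· / _) h1
  have hmean2 : s.esymmMean k * s.esymmMean (k + 2) = q.esymmMean 2 := by
    rw [esymmMean, esymmMean, esymmMean, hs, hq, ← h2, Nat.choose_self, Nat.choose_symm_add,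
      Nat.cast_one, div_one, div_mul_eq_mul_div]
  rw [hmean1, hmean2]
  exact esymmMean_two_le_sq_esymmMean_one q

theorem exists_card_eq_esymmMean_eq {s : Multiset ℝ} {d : ℕ} (hs : card s = d + 1) :
    ∃ t : Multiset ℝ, card t = d ∧ ∀ m ≤ d, t.esymmMean m = s.esymmMean m := by
  set p : ℝ[X] := (s.map fun a => X - C a).prod
  have hroots : p.roots = s := roots_multiset_prod_X_sub_C s
  have hdeg : p.natDegree = d + 1 := by rw [natDegree_multiset_prod_X_sub_C_eq_card, hs]
  have hcard : card p.roots = p.natDegree := by rw [hroots, hdeg, hs]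
  have hcard' : card (derivative p).roots = d := by
    rw [card_roots_derivative_eq_natDegree hcard, natDegree_derivative, hdeg, Nat.add_sub_cancel]
  refine ⟨(derivative p).roots, hcard', fun m hm => ?_⟩
  have he := natDegree_mul_esymm_roots_derivative hcard (m := m) (by omega)
  have hc : (d.choose m : ℝ) * (d + 1) = (d + 1).choose m * ((d + 1 - m : ℕ) : ℝ) := by
    exact_mod_cast Nat.choose_mul_succ_eq d m
  rw [hroots, hdeg] at he
  have hdm : (0 : ℝ) < (d + 1 - m : ℕ) := by exact_mod_cast (by omega : 0 < d + 1 - m)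
  have hdc : (0 : ℝ) < d.choose m := by exact_mod_cast Nat.choose_pos hm
  rw [esymmMean, esymmMean, hcard', hs,
    div_eq_div_iff hdc.ne' (by exact_mod_cast (Nat.choose_pos (by omega)).ne')]
  push_cast at he
  apply mul_left_cancel₀ hdm.ne'
  linear_combination (d.choose m : ℝ) * he - (derivative p).roots.esymm m * hc

theorem esymmMean_mul_esymmMean_le_sq (s : Multiset ℝ) (k : ℕ) :
    s.esymmMean k * s.esymmMean (k + 2) ≤ s.esymmMean (k + 1) ^ 2 := by
  induction hs : card s generalizing s with
  | zero =>
    rw [esymmMean_of_card_lt (by omega : card s < k + 2), mul_zero]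
    positivity
  | succ d ih =>
    rcases lt_trichotomy (d + 1) (k + 2) with hlt | heq | hgt
    · rw [esymmMean_of_card_lt (k := k + 2) (hs ▸ hlt), mul_zero]
      positivity
    · exact esymmMean_mul_esymmMean_le_sq_of_card_eq (hs.trans heq)
    · obtain ⟨t, ht, hmean⟩ := exists_card_eq_esymmMean_eq hs
      rw [← hmean k (by omega), ← hmean (k + 1) (by omega), ← hmean (k + 2) (by omega)]
      exact ih t ht

end Multiset

theorem pow_succ_le_pow_of_mul_le_sq {H : ℕ → ℝ} (h0 : H 0 = 1)
    (hH : ∀ k, H k * H (k + 2) ≤ H (k + 1) ^ 2) {j : ℕ} (hpos : ∀ k ≤ j + 1, 0 < H k) :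
    H (j + 1) ^ j ≤ H j ^ (j + 1) := by
  induction j with
  | zero => simp [h0]
  | succ i ih =>
    have hi := hpos i (by omega)
    have hi1 := hpos (i + 1) (by omega)
    have hi2 := hpos (i + 2) (by omega)
    refine le_of_mul_le_mul_right ?_ (pow_pos hi1 i)
    calc H (i + 2) ^ (i + 1) * H (i + 1) ^ i
        ≤ H (i + 2) ^ (i + 1) * H i ^ (i + 1) := by
          gcongr
          exact ih fun k hk => hpos k (by omega)
      _ = (H i * H (i + 2)) ^ (i + 1) := by ring
      _ ≤ (H (i + 1) ^ 2) ^ (i + 1) := by gcongr; exact hH i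
      _ = H (i + 1) ^ (i + 1 + 1) * H (i + 1) ^ i := by ring

theorem Real.rpow_inv_succ_le_rpow_inv_of_pow_le {a b : ℝ} (ha : 0 ≤ a) (hb : 0 ≤ b) {j : ℕ}
    (hj : j ≠ 0) (h : a ^ j ≤ b ^ (j + 1)) :
    a ^ ((1 : ℝ) / (j + 1)) ≤ b ^ ((1 : ℝ) / j) := by
  have hj' : (j : ℝ) ≠ 0 := by exact_mod_cast hj
  calc a ^ ((1 : ℝ) / (j + 1)) = (a ^ j) ^ ((1 : ℝ) / (j * (j + 1))) := by
        rw [← Real.rpow_natCast, ← Real.rpow_mul ha]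
        field_simp
    _ ≤ (b ^ (j + 1)) ^ ((1 : ℝ) / (j * (j + 1))) := by gcongr
    _ = b ^ ((1 : ℝ) / j) := by
        rw [← Real.rpow_natCast, ← Real.rpow_mul hb]
        push_cast
        field_simp

theorem newton_chain_inequality_general (n : ℕ) (l : Fin n → ℝ)
    (H : ℕ → ℝ) (hH : ∀ r, H r = esymm n r l / (n.choose r))
    (r : ℕ)
    (hpos : ∀ j : ℕ, 1 ≤ j → j ≤ r → 0 < H j) :
    ∀ j : ℕ, 1 ≤ j → j < r →
      (H (j + 1)) ^ ((1 : ℝ) / (j + 1)) ≤ (H j) ^ ((1 : ℝ) / j) := by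
  intro j hj hjr
  set s : Multiset ℝ := (univ : Finset (Fin n)).val.map l
  have hHs : H = s.esymmMean := by
    ext k
    rw [hH, Multiset.esymmMean, esymm_map_val, Multiset.card_map, card_val, card_univ,
      Fintype.card_fin]
    rfl
  have hpos' : ∀ k ≤ j + 1, 0 < H k := by
    intro k hk
    rcases Nat.eq_zero_or_pos k with rfl | hk0
    · simp [hHs, Multiset.esymmMean_zero]
    · exact hpos k hk0 (by omega)
  refine Real.rpow_inv_succ_le_rpow_inv_of_pow_le (hpos' _ le_rfl).le (hpos' j (by omega)).le
    (by omega) (pow_succ_le_pow_of_mul_le_sq ?_ ?_ hpos')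
  · rw [hHs, Multiset.esymmMean_zero]
  · rw [hHs]
    exact s.esymmMean_mul_esymmMean_le_sq

/-- If `H₁, …, H_r > 0`, then `H₁ ≥ H₂^{1/2} ≥ ⋯ ≥ H_r^{1/r}`. -/
theorem newton_chain_inequality (n : ℕ) (hn : 1 < n) (l : Fin n → ℝ)
    (H : ℕ → ℝ) (hH : ∀ r, H r = esymm n r l / (n.choose r))
    (r : ℕ) (hr1 : 1 < r) (hrn : r ≤ n)
    (hpos : ∀ j : ℕ, 1 ≤ j → j ≤ r → 0 < H j) :
    ∀ j : ℕ, 1 ≤ j → j < r →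
      (H (j + 1)) ^ ((1 : ℝ) / (j + 1)) ≤ (H j) ^ ((1 : ℝ) / j) :=
  newton_chain_inequality_general n l H hH r hpos
end

section
/- For a self-adjoint endomorphism A of an n-dimensional real inner product space with Newton transformations P_r, one has tr(A² P_r) = (−1)^r (S₁ S_{r+1} − (r + 2) S_{r+2}). -/
/-!
Unwinding the recursion gives `P_r = ∑_{i+j=r} (-1)^i S_i A^j`, hence
`tr(A² P_r) = ∑_{i+j=r} (-1)^i S_i p_{j+2}`, where `p_k = tr A^k = ∑ λ_l^k` are the power sums of
the eigenvalues. Newton's identity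
`(r+2) S_{r+2} = (-1)^{r+3} ∑_{i<r+2} (-1)^i S_i p_{r+2-i}` contains exactly this sum together
with the single extra term `i = r+1`, which equals `(-1)^{r+1} S_{r+1} S_1` because `p_1 = S_1`.
-/

open scoped InnerProductSpace

/-- The Newton transformations associated to an endomorphism `A` and the
elementary symmetric functions `S` of its eigenvalues:
`P₀ = I`, `P_r = (−1)^r S_r I + A ∘ P_{r−1}`. -/
noncomputable def newtonP {E : Type*} [NormedAddCommGroup E] [InnerProductSpace ℝ E]
    (A : E →ₗ[ℝ] E) (S : ℕ → ℝ) : ℕ → (E →ₗ[ℝ] E)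
  | 0 => LinearMap.id
  | r + 1 => ((-1 : ℝ) ^ (r + 1) * S (r + 1)) • LinearMap.id + A ∘ₗ newtonP A S r

open Finset

namespace MvPolynomial

variable (σ R : Type*) [Fintype σ] [CommRing R]

theorem sum_antidiagonal_esymm_mul_psum_add_two (r : ℕ) :
    ∑ p ∈ antidiagonal r, (-1) ^ p.1 * esymm σ R p.1 * psum σ R (p.2 + 2)
      = (-1) ^ r * (esymm σ R 1 * esymm σ R (r + 1) - (r + 2) * esymm σ R (r + 2)) := by
  have newton := mul_esymm_eq_sum σ R (r + 2)
  rw [sum_filter, Nat.sum_antidiagonal_succ', Nat.sum_antidiagonal_succ', if_neg (lt_irrefl _),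
    if_pos (by omega), sum_congr rfl fun p hp => if_pos (by
      have := HasAntidiagonal.mem_antidiagonal.mp hp; omega),
    psum_one, ← esymm_one] at newton
  set T := ∑ p ∈ antidiagonal r, (-1) ^ p.1 * esymm σ R p.1 * psum σ R (p.2 + 2)
  have hsq : ((-1 : MvPolynomial σ R) ^ r) ^ 2 = 1 := by
    rw [← pow_mul, pow_mul', neg_one_sq, one_pow]
  push_cast at newton
  linear_combination (-1) ^ r * newton + ((-1) ^ r * esymm σ R 1 * esymm σ R (r + 1) - T) * hsq

end MvPolynomial

theorem LinearMap.trace_pow_eq_sum_of_apply_basis {R M ι : Type*} [CommRing R] [AddCommGroup M]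
    [Module R M] [Fintype ι] (b : Module.Basis ι R M) {f : M →ₗ[R] M} {lam : ι → R}
    (hf : ∀ i, f (b i) = lam i • b i) (k : ℕ) :
    trace R M (f ^ k) = ∑ i, lam i ^ k := by
  classical
  have hdiag : toMatrix b b f = Matrix.diagonal lam := by
    ext i j
    rw [toMatrix_apply, hf, map_smul, b.repr_self, Finsupp.smul_single, smul_eq_mul, mul_one,
      Matrix.diagonal_apply, Finsupp.single_apply]
    grind
  rw [trace_eq_matrix_trace R b, ← toMatrix_pow, hdiag, Matrix.diagonal_pow, Matrix.trace_diagonal]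
  rfl

theorem newtonP_eq_sum_antidiagonal {E : Type*} [NormedAddCommGroup E]
    [InnerProductSpace ℝ E] (A : E →ₗ[ℝ] E) {S : ℕ → ℝ} (hS : S 0 = 1) (r : ℕ) :
    newtonP A S r = ∑ p ∈ antidiagonal r, ((-1) ^ p.1 * S p.1) • A ^ p.2 := by
  induction r with
  | zero => simp [newtonP, hS, Module.End.one_eq_id]
  | succ r ih =>
    rw [newtonP, ih, Nat.sum_antidiagonal_succ', pow_zero, Module.End.one_eq_id,
      ← Module.End.mul_eq_comp, mul_sum]
    simp only [pow_succ', mul_smul_comm]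

theorem esymm_eq_eval_esymm (n r : ℕ) (l : Fin n → ℝ) :
    esymm n r l = MvPolynomial.eval l (MvPolynomial.esymm (Fin n) ℝ r) := by
  simp [esymm, MvPolynomial.esymm]

theorem trace_sq_comp_newtonP_general {E : Type*} [NormedAddCommGroup E] [InnerProductSpace ℝ E]
    (n : ℕ) (A : E →ₗ[ℝ] E)
    (b : OrthonormalBasis (Fin n) ℝ E) (lam : Fin n → ℝ)
    (hb : ∀ i, A (b i) = lam i • b i)
    (S : ℕ → ℝ) (hS : ∀ r, S r = esymm n r lam) :
    ∀ r : ℕ, r ≤ n →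
      LinearMap.trace ℝ E (A ∘ₗ A ∘ₗ newtonP A S r)
        = (-1 : ℝ) ^ r * (S 1 * S (r + 1) - ((r : ℝ) + 2) * S (r + 2)) := by
  intro r _
  have hS0 : S 0 = 1 := by simp [hS, esymm]
  have hb' : ∀ i, A (b.toBasis i) = lam i • b.toBasis i := by simpa using hb
  calc LinearMap.trace ℝ E (A ∘ₗ A ∘ₗ newtonP A S r)
      = ∑ p ∈ antidiagonal r, (-1) ^ p.1 * S p.1 * LinearMap.trace ℝ E (A ^ (p.2 + 2)) := by
        rw [← Module.End.mul_eq_comp, ← Module.End.mul_eq_comp, ← mul_assoc, ← sq,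
          newtonP_eq_sum_antidiagonal A hS0, mul_sum, map_sum]
        simp only [mul_smul_comm, ← pow_add, map_smul, smul_eq_mul, add_comm 2]
    _ = MvPolynomial.eval lam (∑ p ∈ antidiagonal r,
          (-1) ^ p.1 * MvPolynomial.esymm (Fin n) ℝ p.1 * MvPolynomial.psum (Fin n) ℝ (p.2 + 2)) := by
        simp [LinearMap.trace_pow_eq_sum_of_apply_basis b.toBasis hb', hS, esymm_eq_eval_esymm,
          MvPolynomial.psum]
    _ = _ := by
        rw [MvPolynomial.sum_antidiagonal_esymm_mul_psum_add_two]
        simp [hS, esymm_eq_eval_esymm]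

/-- `tr(A² P_r) = (−1)^r (S₁ S_{r+1} − (r + 2) S_{r+2})`. -/
theorem trace_sq_comp_newtonP {E : Type*} [NormedAddCommGroup E] [InnerProductSpace ℝ E]
    [FiniteDimensional ℝ E] (n : ℕ) (hdim : Module.finrank ℝ E = n)
    (A : E →ₗ[ℝ] E) (hA : A.IsSymmetric)
    (b : OrthonormalBasis (Fin n) ℝ E) (lam : Fin n → ℝ)
    (hb : ∀ i, A (b i) = lam i • b i)
    (S : ℕ → ℝ) (hS : ∀ r, S r = esymm n r lam) :
    ∀ r : ℕ, r ≤ n →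
      LinearMap.trace ℝ E (A ∘ₗ A ∘ₗ newtonP A S r)
        = (-1 : ℝ) ^ r * (S 1 * S (r + 1) - ((r : ℝ) + 2) * S (r + 2)) :=
  trace_sq_comp_newtonP_general n A b lam hb S hS
end

section
/- Let Σ be a complete Riemannian manifold with nonnegative sectional curvature and Φ a positive semi-definite field of self-adjoint endomorphisms of TΣ with tr(Φ) bounded above, such that the Omori–Yau principle holds for □f = tr(Φ Hess f) and □ satisfies the product rule □(φ∘f) = φ'(f) □f + φ''(f) ⟨Φ∇f, ∇f⟩. If f ≥ 0 is smooth and □f ≥ a f^β for some constants a > 0 and β > 1, then f ≡ 0. -/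
set_option maxHeartbeats 1000000


open scoped InnerProductSpace

section aux

lemma trace_via_onb' {E : Type*} [NormedAddCommGroup E] [InnerProductSpace ℝ E]
    [FiniteDimensional ℝ E]
    {ι : Type*} [Fintype ι] [DecidableEq ι] (b : OrthonormalBasis ι ℝ E) (T : E →ₗ[ℝ] E) :
    LinearMap.trace ℝ E T = ∑ i, ⟪b i, T (b i)⟫_ℝ := by
  rw [LinearMap.trace_eq_matrix_trace ℝ b.toBasis T, Matrix.trace]
  congr 1; ext i
  rw [Matrix.diag_apply, LinearMap.toMatrix_apply, OrthonormalBasis.coe_toBasis_repr_apply,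
    OrthonormalBasis.repr_apply_apply, OrthonormalBasis.coe_toBasis]

lemma inner_le_trace_mul' {E : Type*} [NormedAddCommGroup E] [InnerProductSpace ℝ E]
    [FiniteDimensional ℝ E] (T : E →ₗ[ℝ] E) (hpos : ∀ w, 0 ≤ ⟪T w, w⟫_ℝ) (v : E) :
    ⟪T v, v⟫_ℝ ≤ LinearMap.trace ℝ E T * ‖v‖ ^ 2 := by
  classical
  rcases eq_or_ne v 0 with rfl | hv
  · simp
  · set w : E := ‖v‖⁻¹ • v with hw
    have hnv : (0:ℝ) < ‖v‖ := norm_pos_iff.2 hv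
    have hwn : ‖w‖ = 1 := by
      rw [hw, norm_smul, norm_inv, norm_norm, inv_mul_cancel₀ hnv.ne']
    have horth : Orthonormal ℝ ((↑) : ({w} : Set E) → E) := by
      rw [orthonormal_subtype_iff_ite]
      intro u hu u' hu'
      simp only [Set.mem_singleton_iff] at hu hu'
      subst hu; subst hu'
      simp [real_inner_self_eq_norm_sq, hwn]
    obtain ⟨u, b, hsub, hb⟩ := horth.exists_orthonormalBasis_extension
    have hwu : w ∈ u := hsub rfl
    have htr : LinearMap.trace ℝ E T = ∑ i, ⟪b i, T (b i)⟫_ℝ := trace_via_onb' b T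
    have hterm : ⟪b ⟨w, hwu⟩, T (b ⟨w, hwu⟩)⟫_ℝ ≤ ∑ i, ⟪b i, T (b i)⟫_ℝ := by
      apply Finset.single_le_sum (f := fun i => ⟪b i, T (b i)⟫_ℝ)
      · intro i _
        rw [real_inner_comm]; exact hpos _
      · exact Finset.mem_univ _
    have hbw : b ⟨w, hwu⟩ = w := by rw [hb]
    have key : ⟪T w, w⟫_ℝ ≤ LinearMap.trace ℝ E T := by
      rw [htr]; rw [hbw] at hterm; rw [real_inner_comm]; exact hterm
    have hexp : ⟪T v, v⟫_ℝ = ‖v‖ ^ 2 * ⟪T w, w⟫_ℝ := by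
      rw [hw, map_smul, real_inner_smul_left, real_inner_smul_right]
      field_simp
    rw [hexp, mul_comm]
    have := mul_le_mul_of_nonneg_right key (by positivity : (0:ℝ) ≤ ‖v‖^2)
    linarith

lemma gradient_comp'' {F : Type*} [NormedAddCommGroup F] [InnerProductSpace ℝ F]
    [CompleteSpace F] (φ : ℝ → ℝ) (f : F → ℝ) (x : F) (φ' : ℝ)
    (hφ : HasDerivAt φ φ' (f x)) (hf : DifferentiableAt ℝ f x) :
    gradient (fun y => φ (f y)) x = φ' • gradient f x := by
  have h1 : HasGradientAt f (gradient f x) x := hf.hasGradientAt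
  have h2 : HasFDerivAt f ((InnerProductSpace.toDual ℝ F) (gradient f x) : F →L[ℝ] ℝ) x := by
    rw [← hasGradientAt_iff_hasFDerivAt]; exact h1
  have h3 : HasFDerivAt (fun y => φ (f y))
      (φ' • ((InnerProductSpace.toDual ℝ F) (gradient f x) : F →L[ℝ] ℝ)) x :=
    hφ.comp_hasFDerivAt x h2
  have h4 : HasGradientAt (fun y => φ (f y)) (φ' • gradient f x) x := by
    rw [hasGradientAt_iff_hasFDerivAt]
    rw [map_smul]
    exact h3
  exact h4.gradient

noncomputable def phiA (c : ℝ) : ℝ → ℝ := fun t => (1 + t ^ 2) ^ (-c)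

lemma phiA_base_pos (t : ℝ) : (0:ℝ) < 1 + t ^ 2 := by positivity

lemma phiA_contDiff (c : ℝ) : ContDiff ℝ (⊤ : ℕ∞) (phiA c) := by
  rw [contDiff_iff_contDiffAt]
  intro t
  exact ((contDiff_const.add (contDiff_id.pow 2)).contDiffAt).rpow_const_of_ne
    (ne_of_gt (phiA_base_pos t))

lemma hasDerivAt_base (t : ℝ) : HasDerivAt (fun t : ℝ => 1 + t ^ 2) (2 * t) t := by
  simpa using ((hasDerivAt_pow 2 t).const_add 1)

lemma phiA_hasDerivAt (c t : ℝ) :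
    HasDerivAt (phiA c) (-c * (1 + t ^ 2) ^ (-c - 1) * (2 * t)) t := by
  have := (hasDerivAt_base t).rpow_const (p := -c) (Or.inl (ne_of_gt (phiA_base_pos t)))
  convert this using 1
  · rfl
  ring

lemma phiA_deriv (c : ℝ) :
    deriv (phiA c) = fun t => -c * (1 + t ^ 2) ^ (-c - 1) * (2 * t) :=
  funext fun t => (phiA_hasDerivAt c t).deriv

lemma phiA_deriv2_hasDerivAt (c t : ℝ) :
    HasDerivAt (fun t : ℝ => -c * (1 + t ^ 2) ^ (-c - 1) * (2 * t))
      (-c * ((-c-1) * (1 + t ^ 2) ^ (-c - 2) * (2*t)) * (2 * t)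
        + -c * (1 + t ^ 2) ^ (-c - 1) * 2) t := by
  have h1 : HasDerivAt (fun t : ℝ => (1 + t ^ 2) ^ (-c - 1))
      ((-c-1) * (1 + t ^ 2) ^ (-c - 2) * (2*t)) t := by
    have := (hasDerivAt_base t).rpow_const (p := -c-1) (Or.inl (ne_of_gt (phiA_base_pos t)))
    convert this using 1
    rw [show (-c-1-1 : ℝ) = -c-2 by ring]
    ring
  have h2 : HasDerivAt (fun t : ℝ => -c * (1 + t ^ 2) ^ (-c - 1))
      (-c * ((-c-1) * (1 + t ^ 2) ^ (-c - 2) * (2*t))) t := h1.const_mul (-c)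
  have h3 : HasDerivAt (fun t : ℝ => (2:ℝ) * t) 2 t := by
    simpa using (hasDerivAt_id t).const_mul (2:ℝ)
  have := h2.mul h3
  exact this
  try ring

lemma phiA_deriv_deriv (c t : ℝ) :
    deriv (deriv (phiA c)) t
      = -c * ((-c-1) * (1 + t ^ 2) ^ (-c - 2) * (2*t)) * (2 * t)
        + -c * (1 + t ^ 2) ^ (-c - 1) * 2 := by
  rw [phiA_deriv]
  exact (phiA_deriv2_hasDerivAt c t).deriv

lemma key_arith (a c κ t C W Q S A1 A2 B1 B2 X P1 T4 E2 Eδ K1 K2 : ℝ)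
    (hc : 0 < c) (ha : 0 < a) (hκ : 1 ≤ κ) (ht : 0 < t) (hC : 0 ≤ C)
    (hW : 0 ≤ W) (hQ0 : 0 ≤ Q) (hQ : Q ≤ C * W ^ 2)
    (hA1 : 0 < A1) (hA2 : 0 ≤ A2) (hB1p : 0 < B1) (hB2 : 0 ≤ B2)
    (hT4 : 0 < T4) (hEδ : 0 ≤ Eδ) (hP1 : 0 ≤ P1)
    (hE2 : 0 ≤ E2) (hK1 : 0 ≤ K1) (hK2 : 0 ≤ K2)
    (J1 : A1 * B1 = 1) (J2 : A2 * B1 = A1 * A1 * B2)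
    (hgrad : 2*c*t*A1*W < 1/κ)
    (hop : 2*c*t*A1*S < 1/κ + 4*c*(c+1)*t^2*A2*Q)
    (hS : a * P1 ≤ S) (hP1X : t * P1 = X)
    (hXle : Eδ * T4 ≤ X)
    (hB1le : B1 ≤ K1 * (E2 * T4))
    (hB2le : B2 ≤ K2 * T4)
    (hk : K1 * E2 + (c+1)*C*K2/c < κ * (2*c*a*Eδ)) : False := by
  have hκ0 : 0 < κ := lt_of_lt_of_le one_pos hκ
  have h1 : κ*B1*(2*c*t*A1*S) < κ*B1*(1/κ + 4*c*(c+1)*t^2*A2*Q) :=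
    mul_lt_mul_of_pos_left hop (by positivity)
  have e0 : κ*B1*(1/κ + 4*c*(c+1)*t^2*A2*Q) = B1 + κ*B1*(4*c*(c+1)*t^2*A2*Q) := by
    field_simp
  have l1 : κ*(2*c*a*X) ≤ κ*B1*(2*c*t*A1*S) := by
    have inner : (2*c*t*A1)*(a*P1) ≤ (2*c*t*A1)*S := mul_le_mul_of_nonneg_left hS (by positivity)
    calc κ*(2*c*a*X) = κ*B1*(2*c*t*A1*(a*P1)) := by
          linear_combination (-(κ*2*c*a))*hP1X + (-(κ*2*c*a*t*P1))*J1
      _ ≤ κ*B1*(2*c*t*A1*S) := mul_le_mul_of_nonneg_left inner (by positivity)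
  have hs1 : κ*(2*c*t*A1*W) < 1 := by
    have := mul_lt_mul_of_pos_left hgrad hκ0
    rwa [mul_one_div, div_self hκ0.ne'] at this
  have hs0 : 0 ≤ κ*(2*c*t*A1*W) := by positivity
  have hsq : (κ*(2*c*t*A1*W))^2 ≤ 1 := by nlinarith
  have e2 : κ*B1*(4*c*(c+1)*t^2*A2*Q) * (c*κ) ≤ (c+1)*C*B2 * 1 := by
    have eQ : κ*B1*(4*c*(c+1)*t^2*A2*Q) ≤ κ*B1*(4*c*(c+1)*t^2*A2*(C*W^2)) := by
      have : 4*c*(c+1)*t^2*A2*Q ≤ 4*c*(c+1)*t^2*A2*(C*W^2) :=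
        mul_le_mul_of_nonneg_left hQ (by positivity)
      exact mul_le_mul_of_nonneg_left this (by positivity)
    have eEq : κ*B1*(4*c*(c+1)*t^2*A2*(C*W^2)) * (c*κ) = (c+1)*C*B2 * (κ*(2*c*t*A1*W))^2 := by
      linear_combination (4*c^2*(c+1)*t^2*C*W^2*κ^2) * J2
    calc κ*B1*(4*c*(c+1)*t^2*A2*Q)*(c*κ)
        ≤ κ*B1*(4*c*(c+1)*t^2*A2*(C*W^2))*(c*κ) := mul_le_mul_of_nonneg_right eQ (by positivity)
      _ = (c+1)*C*B2*(κ*(2*c*t*A1*W))^2 := eEq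
      _ ≤ (c+1)*C*B2*1 := mul_le_mul_of_nonneg_left hsq (by positivity)
  have e3 : κ*B1*(4*c*(c+1)*t^2*A2*Q) ≤ (c+1)*C*K2*T4/c := by
    have h : κ*B1*(4*c*(c+1)*t^2*A2*Q) ≤ (c+1)*C*B2/(c*κ) := by
      rw [le_div_iff₀ (by positivity)]
      have := e2
      rw [mul_one] at this
      exact this
    have hcκ : c ≤ c*κ := by nlinarith
    have h2 : (c+1)*C*B2/(c*κ) ≤ (c+1)*C*B2/c :=
      div_le_div_of_nonneg_left (by positivity) hc hcκ
    have h3 : (c+1)*C*B2/c ≤ (c+1)*C*(K2*T4)/c := by gcongr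
    have h4 : (c+1)*C*(K2*T4)/c = (c+1)*C*K2*T4/c := by ring
    linarith
  have main : κ*(2*c*a*X) < B1 + (c+1)*C*K2*T4/c := by
    calc κ*(2*c*a*X) ≤ κ*B1*(2*c*t*A1*S) := l1
      _ < κ*B1*(1/κ + 4*c*(c+1)*t^2*A2*Q) := h1
      _ = B1 + κ*B1*(4*c*(c+1)*t^2*A2*Q) := e0
      _ ≤ B1 + (c+1)*C*K2*T4/c := by linarith [e3]
  have low : κ*(2*c*a*(Eδ*T4)) ≤ κ*(2*c*a*X) := by gcongr
  have up : B1 + (c+1)*C*K2*T4/c ≤ (K1*E2 + (c+1)*C*K2/c)*T4 := by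
    have expand : (K1*E2 + (c+1)*C*K2/c)*T4 = K1*(E2*T4) + (c+1)*C*K2*T4/c := by ring
    linarith [hB1le]
  have final : κ*(2*c*a*Eδ)*T4 < (K1*E2 + (c+1)*C*K2/c)*T4 := by
    calc κ*(2*c*a*Eδ)*T4 = κ*(2*c*a*(Eδ*T4)) := by ring
      _ ≤ κ*(2*c*a*X) := low
      _ < B1 + (c+1)*C*K2*T4/c := main
      _ ≤ _ := up
  have hfin := (mul_lt_mul_iff_of_pos_right hT4).mp final
  linarith

end aux

/-- The operator `□ f = tr(Φ ∘ Hess f)`, with the Hessian realized as the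
derivative of the gradient. -/
noncomputable def squareOp {n : ℕ} (Φ : EuclideanSpace ℝ (Fin n) →
      (EuclideanSpace ℝ (Fin n) →ₗ[ℝ] EuclideanSpace ℝ (Fin n)))
    (f : EuclideanSpace ℝ (Fin n) → ℝ) (x : EuclideanSpace ℝ (Fin n)) : ℝ :=
  LinearMap.trace ℝ _ ((Φ x) ∘ₗ (fderiv ℝ (fun y => gradient f y) x : _ →ₗ[ℝ] _))

/-- Akutagawa-type lemma for the square operator: on a complete manifold of
nonnegative sectional curvature (Euclidean space), if `Φ` is positive
semi-definite with `tr Φ` bounded above, the Omori–Yau principle holds for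
`□ f = tr(Φ Hess f)`, `□` satisfies the chain rule
`□(φ∘f) = φ'(f) □f + φ''(f) ⟨Φ∇f, ∇f⟩`, and `f ≥ 0` is smooth with
`□f ≥ a f^β` for some `a > 0`, `β > 1`, then `f ≡ 0`. -/
theorem akutagawa_squareOp {n : ℕ}
    (Φ : EuclideanSpace ℝ (Fin n) →
      (EuclideanSpace ℝ (Fin n) →ₗ[ℝ] EuclideanSpace ℝ (Fin n)))
    (hΦsym : ∀ x, (Φ x).IsSymmetric)
    (hΦpos : ∀ x v, 0 ≤ ⟪Φ x v, v⟫_ℝ)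
    (hΦtr : ∃ C : ℝ, ∀ x, LinearMap.trace ℝ _ (Φ x) ≤ C)
    (hOY : ∀ g : EuclideanSpace ℝ (Fin n) → ℝ, ContDiff ℝ (⊤ : ℕ∞) g →
      BddBelow (Set.range g) →
      ∃ p : ℕ → EuclideanSpace ℝ (Fin n), ∀ k : ℕ, 1 ≤ k →
        g (p k) < (⨅ x, g x) + 1 / k ∧
        ‖gradient g (p k)‖ < 1 / k ∧
        -(1 / k) < squareOp Φ g (p k))
    (f : EuclideanSpace ℝ (Fin n) → ℝ) (hf : ContDiff ℝ (⊤ : ℕ∞) f)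
    (hchain : ∀ φ : ℝ → ℝ, ContDiff ℝ (⊤ : ℕ∞) φ → ∀ x,
      squareOp Φ (fun y => φ (f y)) x
        = deriv φ (f x) * squareOp Φ f x
          + deriv (deriv φ) (f x) * ⟪Φ x (gradient f x), gradient f x⟫_ℝ)
    (hf0 : ∀ x, 0 ≤ f x)
    (a β : ℝ) (ha : 0 < a) (hβ : 1 < β)
    (hineq : ∀ x, a * f x ^ β ≤ squareOp Φ f x) :
    ∀ x, f x = 0 := by
  by_contra h
  push_neg at h
  obtain ⟨x₀, hx₀⟩ := h
  have hx : 0 < f x₀ := lt_of_le_of_ne (hf0 x₀) (Ne.symm hx₀)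
  -- constants
  set c : ℝ := (β - 1) / 8 with hc_def
  have hc : 0 < c := by rw [hc_def]; linarith
  set δ : ℝ := β - 1 - 4 * c with hδ_def
  have hδ : 0 < δ := by rw [hδ_def, hc_def]; linarith
  obtain ⟨C₀, hC₀⟩ := hΦtr
  set C : ℝ := max C₀ 0 with hC_def
  have hC : 0 ≤ C := le_max_right _ _
  have hCtr : ∀ y, LinearMap.trace ℝ _ (Φ y) ≤ C := fun y => (hC₀ y).trans (le_max_left _ _)
  -- the auxiliary function
  set g : EuclideanSpace ℝ (Fin n) → ℝ := fun y => phiA c (f y) with hg_def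
  have hgcd : ContDiff ℝ (⊤ : ℕ∞) g := (phiA_contDiff c).comp hf
  have hg0 : ∀ y, 0 ≤ g y := fun y => Real.rpow_nonneg (phiA_base_pos (f y)).le _
  have hgb : BddBelow (Set.range g) := ⟨0, by rintro _ ⟨y, rfl⟩; exact hg0 y⟩
  obtain ⟨p, hp⟩ := hOY g hgcd hgb
  -- quantities depending on x₀
  set m : ℝ := (1 + f x₀ ^ 2) ^ (-c) with hm_def
  have hm0 : 0 ≤ m := Real.rpow_nonneg (phiA_base_pos (f x₀)).le _
  have hm1 : m < 1 := by
    rw [hm_def]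
    exact Real.rpow_lt_one_of_one_lt_of_neg ((lt_add_iff_pos_right 1).2 (pow_pos hx 2)) (by linarith)
  set r : ℝ := (1 + m) / 2 with hr_def
  have hr0 : 0 < r := by rw [hr_def]; linarith
  have hr1 : r < 1 := by rw [hr_def]; linarith
  set E0 : ℝ := (1 / r) ^ (1 / c) - 1 with hE0_def
  have hE0 : 0 < E0 := by
    have h1r : 1 < 1 / r := by rw [lt_div_iff₀ hr0]; linarith
    have := Real.one_lt_rpow_iff_of_pos (by positivity : (0:ℝ) < 1 / r) (y := 1 / c)
    rw [hE0_def]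
    have h2 : 1 < (1 / r) ^ (1 / c) := this.2 (Or.inl ⟨h1r, by positivity⟩)
    linarith
  set ε : ℝ := Real.sqrt E0 with hε_def
  have hε : 0 < ε := Real.sqrt_pos.2 hE0
  set K₀ : ℝ := 1 + (1 / ε) ^ 2 with hK₀_def
  have hK₀0 : 0 < K₀ := by positivity
  set K1 : ℝ := K₀ ^ (c + 1) with hK1_def
  set K2 : ℝ := K₀ ^ (2 * c + 1) with hK2_def
  set E2 : ℝ := ε ^ (-(2 * c)) with hE2_def
  set Eδ : ℝ := ε ^ δ with hEδ_def
  have hEδ0 : 0 < Eδ := Real.rpow_pos_of_pos hε _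
  set D : ℝ := K1 * E2 + (c + 1) * C * K2 / c with hD_def
  -- choose k
  obtain ⟨k, hk⟩ := exists_nat_gt (max (max (2 / (1 - m)) (D / (2 * c * a * Eδ))) 1)
  have hκ1 : (1:ℝ) < k := lt_of_le_of_lt (le_max_right _ _) hk
  have hk1 : 1 ≤ k := by exact_mod_cast hκ1.le
  have hκ0 : (0:ℝ) < k := by linarith
  have hkb : 2 / (1 - m) < (k:ℝ) := lt_of_le_of_lt ((le_max_left _ _).trans (le_max_left _ _)) hk
  have hkD : D < (k:ℝ) * (2 * c * a * Eδ) := by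
    have h1 : D / (2 * c * a * Eδ) < (k:ℝ) :=
      lt_of_le_of_lt ((le_max_right _ _).trans (le_max_left _ _)) hk
    have h2 : (0:ℝ) < 2 * c * a * Eδ := by positivity
    exact (div_lt_iff₀ h2).mp h1
  obtain ⟨hp1, hp2, hp3⟩ := hp k hk1
  -- local abbreviations
  set q := p k with hq_def
  set t : ℝ := f q with ht_def
  have ht0 : 0 ≤ t := hf0 q
  set v := gradient f q with hv_def
  set W : ℝ := ‖v‖ with hW_def
  set Q : ℝ := ⟪Φ q v, v⟫_ℝ with hQ_def
  set u : ℝ := 1 + t ^ 2 with hu_def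
  have hu0 : (0:ℝ) < u := by positivity
  have hu1 : (1:ℝ) ≤ u := le_add_of_nonneg_right (sq_nonneg t)
  -- lower bound on t
  have hinf : (⨅ x, g x) ≤ m := ciInf_le hgb x₀
  have honek : 1 / (k:ℝ) < (1 - m) / 2 := by
    rw [div_lt_div_iff₀ hκ0 (by norm_num : (0:ℝ) < 2)]
    have : 2 < (k:ℝ) * (1 - m) := by
      rw [div_lt_iff₀ (by linarith : (0:ℝ) < 1 - m)] at hkb
      linarith
    linarith
  have hgq : g q = u ^ (-c) := rfl
  have hgqr : u ^ (-c) < r := by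
    rw [← hgq]
    calc g q < (⨅ x, g x) + 1 / k := hp1
      _ ≤ m + 1 / k := by linarith
      _ < m + (1 - m) / 2 := by linarith
      _ = r := by rw [hr_def]; ring
  have hucp : (0:ℝ) < u ^ c := Real.rpow_pos_of_pos hu0 _
  have huc : 1 / r < u ^ c := by
    have hmul : u ^ (-c) * u ^ c = 1 := by
      rw [← Real.rpow_add hu0]; simp
    have := mul_lt_mul_of_pos_right hgqr hucp
    rw [hmul] at this
    rw [div_lt_iff₀ hr0]
    linarith [this]
  have hult : (1 / r) ^ (1 / c) < u := by
    have h := Real.rpow_lt_rpow (by positivity : (0:ℝ) ≤ 1 / r) huc (by positivity : (0:ℝ) < 1 / c)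
    rwa [← Real.rpow_mul hu0.le, mul_one_div_cancel hc.ne', Real.rpow_one] at h
  have ht2 : E0 < t ^ 2 := by rw [hE0_def]; rw [hu_def] at hult; linarith
  have ht : ε < t := by
    have h := Real.sqrt_lt_sqrt hE0.le ht2
    rwa [Real.sqrt_sq ht0, ← hε_def] at h
  have htp : 0 < t := lt_trans hε ht
  -- gradient estimate
  have hA1p : (0:ℝ) < u ^ (-c - 1) := Real.rpow_pos_of_pos hu0 _
  have hA2p : (0:ℝ) < u ^ (-c - 2) := Real.rpow_pos_of_pos hu0 _
  have hgradg : gradient g q = (-c * u ^ (-c - 1) * (2 * t)) • v := by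
    rw [hg_def, hv_def]
    exact gradient_comp'' (phiA c) f q _ (phiA_hasDerivAt c t)
      ((hf.differentiable (by simp)) q)
  have hgn : ‖gradient g q‖ = 2 * c * t * u ^ (-c - 1) * W := by
    have hnn : 0 ≤ c * u ^ (-c - 1) * (2 * t) := by positivity
    rw [hgradg, norm_smul, Real.norm_eq_abs, abs_of_nonpos (by linarith [hnn]), ← hW_def]
    ring
  have hgrad2 : 2 * c * t * u ^ (-c - 1) * W < 1 / k := by rw [← hgn]; exact hp2
  -- Q bound
  have hQ0 : 0 ≤ Q := hΦpos q v
  have hQC : Q ≤ C * W ^ 2 := by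
    calc Q ≤ LinearMap.trace ℝ _ (Φ q) * ‖v‖ ^ 2 := inner_le_trace_mul' (Φ q) (hΦpos q) v
      _ ≤ C * W ^ 2 := by
          rw [← hW_def]
          exact mul_le_mul_of_nonneg_right (hCtr q) (by positivity)
  -- operator estimate
  set S : ℝ := squareOp Φ f q with hS_def
  have hch := hchain (phiA c) (phiA_contDiff c) q
  have hd1 : deriv (phiA c) t = -c * u ^ (-c - 1) * (2 * t) := by rw [phiA_deriv c]
  have hd2 : deriv (deriv (phiA c)) t
      = -c * ((-c - 1) * u ^ (-c - 2) * (2 * t)) * (2 * t) + -c * u ^ (-c - 1) * 2 :=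
    phiA_deriv_deriv c t
  have hop0 : -(1 / (k:ℝ)) < (-c * u ^ (-c - 1) * (2 * t)) * S
      + (-c * ((-c - 1) * u ^ (-c - 2) * (2 * t)) * (2 * t) + -c * u ^ (-c - 1) * 2) * Q := by
    have := hp3
    rw [hg_def] at this
    rw [hch, ← ht_def, hd1, hd2, ← hS_def, ← hv_def, ← hQ_def] at this
    exact this
  have hop : 2 * c * t * u ^ (-c - 1) * S < 1 / k + 4 * c * (c + 1) * t ^ 2 * u ^ (-c - 2) * Q := by
    have hrw : (-c * u ^ (-c - 1) * (2 * t)) * S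
        + (-c * ((-c - 1) * u ^ (-c - 2) * (2 * t)) * (2 * t) + -c * u ^ (-c - 1) * 2) * Q
        = -(2 * c * t * u ^ (-c - 1) * S) + 4 * c * (c + 1) * t ^ 2 * u ^ (-c - 2) * Q
          - 2 * c * u ^ (-c - 1) * Q := by ring
    rw [hrw] at hop0
    have hnn : 0 ≤ 2 * c * u ^ (-c - 1) * Q := by positivity
    linarith
  -- rpow identities
  have J1 : u ^ (-c - 1) * u ^ (c + 1) = 1 := by
    rw [← Real.rpow_add hu0]; norm_num
  have J2 : u ^ (-c - 2) * u ^ (c + 1) = u ^ (-c - 1) * u ^ (-c - 1) * u ^ (2 * c + 1) := by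
    rw [← Real.rpow_add hu0, ← Real.rpow_add hu0, ← Real.rpow_add hu0]
    congr 1
    ring
  have hP1X : t * t ^ β = t ^ (β + 1) := by
    rw [Real.rpow_add htp, Real.rpow_one]
    ring
  have hXle : Eδ * t ^ (4 * c + 2) ≤ t ^ (β + 1) := by
    have e : t ^ (β + 1) = t ^ δ * t ^ (4 * c + 2) := by
      rw [← Real.rpow_add htp]
      congr 1
      rw [hδ_def]; ring
    rw [e]
    exact mul_le_mul_of_nonneg_right (Real.rpow_le_rpow hε.le ht.le hδ.le)
      (Real.rpow_nonneg htp.le _)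
  have huK : u ≤ K₀ * t ^ 2 := by
    have hεt : ε ^ 2 ≤ t ^ 2 := pow_le_pow_left₀ hε.le ht.le 2
    have h1 : (1 / ε) ^ 2 * ε ^ 2 = 1 := by field_simp
    have h2 : (1 / ε) ^ 2 * ε ^ 2 ≤ (1 / ε) ^ 2 * t ^ 2 :=
      mul_le_mul_of_nonneg_left hεt (by positivity)
    have h3 : (1:ℝ) ≤ (1 / ε) ^ 2 * t ^ 2 := by rw [h1] at h2; exact h2
    have h4 : (1 + (1 / ε) ^ 2) * t ^ 2 = t ^ 2 + (1 / ε) ^ 2 * t ^ 2 := by ring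
    rw [hu_def, hK₀_def, h4]
    linarith [h3]
  have ht2c2 : (t ^ 2 : ℝ) ^ (c + 1) = t ^ (2 * c + 2) := by
    rw [← Real.rpow_natCast t 2, ← Real.rpow_mul htp.le]
    congr 1
    push_cast
    ring
  have ht2c2' : (t ^ 2 : ℝ) ^ (2 * c + 1) = t ^ (4 * c + 2) := by
    rw [← Real.rpow_natCast t 2, ← Real.rpow_mul htp.le]
    congr 1
    push_cast
    ring
  have hB1le : u ^ (c + 1) ≤ K1 * (E2 * t ^ (4 * c + 2)) := by
    have s2 : u ^ (c + 1) ≤ (K₀ * t ^ 2) ^ (c + 1) :=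
      Real.rpow_le_rpow hu0.le huK (by positivity)
    have s3 : (K₀ * t ^ 2) ^ (c + 1) = K₀ ^ (c + 1) * (t ^ 2 : ℝ) ^ (c + 1) :=
      Real.mul_rpow hK₀0.le (by positivity)
    have s5 : t ^ (2 * c + 2) ≤ E2 * t ^ (4 * c + 2) := by
      have e : t ^ (2 * c + 2) = t ^ (-(2 * c)) * t ^ (4 * c + 2) := by
        rw [← Real.rpow_add htp]
        congr 1
        ring
      have hmono : ε ^ (2 * c) ≤ t ^ (2 * c) := Real.rpow_le_rpow hε.le ht.le (by positivity)
      have hinv : t ^ (-(2 * c)) ≤ ε ^ (-(2 * c)) := by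
        rw [Real.rpow_neg htp.le, Real.rpow_neg hε.le]
        exact inv_anti₀ (Real.rpow_pos_of_pos hε _) hmono
      rw [e, hE2_def]
      exact mul_le_mul_of_nonneg_right hinv (Real.rpow_nonneg htp.le _)
    calc u ^ (c + 1) ≤ K₀ ^ (c + 1) * (t ^ 2 : ℝ) ^ (c + 1) := by rw [← s3]; exact s2
      _ = K₀ ^ (c + 1) * t ^ (2 * c + 2) := by rw [ht2c2]
      _ ≤ K₀ ^ (c + 1) * (E2 * t ^ (4 * c + 2)) :=
          mul_le_mul_of_nonneg_left s5 (Real.rpow_nonneg hK₀0.le _)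
      _ = K1 * (E2 * t ^ (4 * c + 2)) := by rw [hK1_def]
  have hB2le : u ^ (2 * c + 1) ≤ K2 * t ^ (4 * c + 2) := by
    have s2 : u ^ (2 * c + 1) ≤ (K₀ * t ^ 2) ^ (2 * c + 1) :=
      Real.rpow_le_rpow hu0.le huK (by positivity)
    have s3 : (K₀ * t ^ 2) ^ (2 * c + 1) = K₀ ^ (2 * c + 1) * (t ^ 2 : ℝ) ^ (2 * c + 1) :=
      Real.mul_rpow hK₀0.le (by positivity)
    calc u ^ (2 * c + 1) ≤ K₀ ^ (2 * c + 1) * (t ^ 2 : ℝ) ^ (2 * c + 1) := by rw [← s3]; exact s2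
      _ = K₀ ^ (2 * c + 1) * t ^ (4 * c + 2) := by rw [ht2c2']
      _ = K2 * t ^ (4 * c + 2) := by rw [hK2_def]
  -- conclude
  exact key_arith a c (k:ℝ) t C W Q S (u ^ (-c - 1)) (u ^ (-c - 2)) (u ^ (c + 1))
    (u ^ (2 * c + 1)) (t ^ (β + 1)) (t ^ β) (t ^ (4 * c + 2)) E2 Eδ K1 K2
    hc ha hκ1.le htp hC (norm_nonneg v) hQ0 hQC hA1p hA2p.le
    (Real.rpow_pos_of_pos hu0 _) (Real.rpow_nonneg hu0.le _)
    (Real.rpow_pos_of_pos htp _) hEδ0.le (Real.rpow_nonneg htp.le _)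
    (Real.rpow_nonneg hε.le _) (Real.rpow_nonneg hK₀0.le _) (Real.rpow_nonneg hK₀0.le _)
    J1 J2 hgrad2 hop (hineq q) hP1X hXle hB1le hB2le (by rw [← hD_def]; exact hkD)
end
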